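/- arXiv:2212.08295 — 2 statements merged into one kernel-verified Lean document; each statement's English description precedes it below -/
import Mathlib

section
/- If S ⊆ M_f^∞ is relatively compact in (M_f^∞, OT_∞), then S is uniformly off-diagonally finite: for every ε > 0, sup{ μ(W̄_ε) : μ ∈ S } < ∞, where W̄_ε denotes the closure of W_ε in W. -/
/-! Common setup: the birth-death plane, Radon measures, partial optimal transport. -/

noncomputable section

open MeasureTheory Topology Filter Set
open scoped ENNReal

/-- The ambient plane `ℝ²` (with the sup-norm, i.e. `q = ∞`). -/
abbrev P2 : Type := ℝ × ℝ

/-- The birth-death plane `W = {(b,d) : b < d}`. -/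
def Wbd : Set P2 := {p | p.1 < p.2}

/-- The closure `W̄` of the birth-death plane. -/
def Wcl : Set P2 := closure Wbd

/-- The diagonal `Δ`. -/
def Diag : Set P2 := {p | p.1 = p.2}

/-- Distance from a point to the diagonal, `‖x - Δ‖`. -/
def distDiag (x : P2) : ℝ := Metric.infDist x Diag

/-- The pseudometric `d(x,y) = min(‖x-y‖, ‖x-Δ‖ + ‖y-Δ‖)` on `W̄`. -/
def dW (x y : P2) : ℝ := min (dist x y) (distDiag x + distDiag y)

/-- The support of a Borel measure: points all of whose neighborhoods have
positive measure. -/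
def msupport {α : Type*} [TopologicalSpace α] [MeasurableSpace α] (μ : Measure α) : Set α :=
  {x | ∀ U ∈ 𝓝 x, 0 < μ U}

/-- `μ` is a Radon measure on the subspace `S`: it vanishes off `S`, is inner regular
(on relatively open sets) by compact sets, outer regular (by relatively open sets), and finite
on compact subsets of `S`. -/
def RadonOn {α : Type*} [TopologicalSpace α] [MeasurableSpace α] (S : Set α)
    (μ : Measure α) : Prop :=
  μ Sᶜ = 0 ∧
  (∀ U : Set α, IsOpen U → μ (U ∩ S) = ⨆ (K : Set α) (_ : K ⊆ U ∩ S) (_ : IsCompact K), μ K) ∧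
  (∀ E : Set α, E ⊆ S → MeasurableSet E →
    μ E = ⨅ (U : Set α) (_ : IsOpen U) (_ : E ⊆ U), μ (U ∩ S)) ∧
  (∀ K : Set α, K ⊆ S → IsCompact K → μ K < ⊤)

/-- The set `M` of Radon measures on `W`. -/
def MRadon : Set (Measure P2) := {μ | RadonOn Wbd μ}

/-- `pers_∞(μ) = sup{‖x-Δ‖ : x ∈ spt μ}` (valued in `ℝ≥0∞`). -/
def persInf (μ : Measure P2) : ℝ≥0∞ := ⨆ x ∈ msupport μ, ENNReal.ofReal (distDiag x)

/-- The space `M^∞` of Radon measures on `W` with finite `∞`-persistence. -/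
def MInf : Set (Measure P2) := {μ | RadonOn Wbd μ ∧ persInf μ < ⊤}

/-- A coupling (admissible transport plan) between `μ` and `ν`: a Radon measure on
`W̄ × W̄` whose marginals restricted to Borel subsets of `W` are `μ` and `ν`. -/
def IsCoupling (π : Measure (P2 × P2)) (μ ν : Measure P2) : Prop :=
  RadonOn (Wcl ×ˢ Wcl) π ∧
  (∀ A : Set P2, A ⊆ Wbd → MeasurableSet A → π (A ×ˢ Wcl) = μ A) ∧
  (∀ B : Set P2, B ⊆ Wbd → MeasurableSet B → π (Wcl ×ˢ B) = ν B)

/-- The `∞`-cost of a transport plan: `sup {d(x,y) : (x,y) ∈ spt π}`. -/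
def costInf (π : Measure (P2 × P2)) : ℝ≥0∞ :=
  ⨆ p ∈ msupport π, ENNReal.ofReal (dW p.1 p.2)

/-- The partial `∞`-optimal transport distance. -/
def OT (μ ν : Measure P2) : ℝ≥0∞ :=
  ⨅ (π : Measure (P2 × P2)) (_ : IsCoupling π μ ν), costInf π

/-- `W_ε = {(x,y) : y - x > ε}`. -/
def Weps (ε : ℝ) : Set P2 := {p | p.2 - p.1 > ε}

/-- The space `M_f^∞` of off-diagonally finite measures. -/
def Mf : Set (Measure P2) := {μ | μ ∈ MInf ∧ ∀ ε : ℝ, 0 < ε → μ (Weps ε) < ⊤}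

/-- The space `M_fin^∞` of finite measures in `M^∞`. -/
def Mfin : Set (Measure P2) := {μ | μ ∈ MInf ∧ μ Wbd < ⊤}

/-- `f ∈ C_c(W)`: a continuous function, compactly supported, with support contained
in the open set `W` (extended by zero to the plane). -/
def IsCcW (f : P2 → ℝ) : Prop :=
  Continuous f ∧ HasCompactSupport f ∧ tsupport f ⊆ Wbd

/-- Convergence of a sequence of measures to `μ` in the distance `OT_∞`. -/
def OTConv (u : ℕ → Measure P2) (μ : Measure P2) : Prop :=
  Tendsto (fun n => OT (u n) μ) atTop (𝓝 0)

/-- `S` is relatively compact in `(M_f^∞, OT_∞)` (sequential formulation, equivalent to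
compactness of the closure in a metric space): every sequence in `S` has a subsequence
converging in `OT_∞` to some element of `M_f^∞`. -/
def RelCompactInMf (S : Set (Measure P2)) : Prop :=
  ∀ u : ℕ → Measure P2, (∀ n, u n ∈ S) →
    ∃ μ ∈ Mf, ∃ φ : ℕ → ℕ, StrictMono φ ∧ Tendsto (fun n => OT (u (φ n)) μ) atTop (𝓝 0)

/-! ### Auxiliary lemmas for the proof -/

lemma isOpen_Wbd : IsOpen Wbd := isOpen_lt continuous_fst continuous_snd

lemma isOpen_Weps (a : ℝ) : IsOpen (Weps a) :=
  isOpen_lt continuous_const (continuous_snd.sub continuous_fst)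

lemma Weps_subset_Wbd {a : ℝ} (ha : 0 < a) : Weps a ⊆ Wbd := by
  intro p hp
  have : a < p.2 - p.1 := hp
  show p.1 < p.2
  linarith

lemma closure_Weps_subset (ε : ℝ) : closure (Weps ε) ⊆ {p : P2 | ε ≤ p.2 - p.1} :=
  by
  apply closure_minimal ?_ (isClosed_le continuous_const (continuous_snd.sub continuous_fst))
  intro p hp
  have : ε < p.2 - p.1 := hp
  exact le_of_lt this

lemma distDiag_ge {ε : ℝ} {x : P2} (hx : ε ≤ x.2 - x.1) : ε / 2 ≤ distDiag x := by
  have hne : Nonempty ↥Diag := ⟨⟨(0, 0), rfl⟩⟩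
  rw [distDiag, Metric.infDist_eq_iInf]
  refine le_ciInf ?_
  rintro ⟨z, hz⟩
  have hz' : z.1 = z.2 := hz
  rw [Prod.dist_eq, le_max_iff]
  by_contra h
  push_neg at h
  obtain ⟨h1, h2⟩ := h
  rw [Real.dist_eq] at h1 h2
  have h1' := abs_lt.mp h1
  have h2' := abs_lt.mp h2
  rcases h1' with ⟨h1a, h1b⟩
  rcases h2' with ⟨h2a, h2b⟩
  linarith

lemma msupport_compl_null (π : Measure (P2 × P2)) : π (msupport π)ᶜ = 0 := by
  apply measure_null_of_locally_null
  intro x hx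
  simp only [msupport, Set.mem_compl_iff, Set.mem_setOf_eq, not_forall] at hx
  obtain ⟨U, hU, hU0⟩ := hx
  exact ⟨U, nhdsWithin_le_nhds hU, le_zero_iff.mp (not_lt.mp hU0)⟩

lemma key_transfer {ε : ℝ} (hε : 0 < ε) {ν μ : Measure P2}
    (h : OT ν μ < ENNReal.ofReal (ε / 4)) :
    ν (closure (Weps ε) ∩ Wbd) ≤ μ (Weps (ε / 2)) := by
  rw [OT] at h
  obtain ⟨π, hπ⟩ := iInf_lt_iff.mp h
  obtain ⟨hc, hcost⟩ := iInf_lt_iff.mp hπ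
  have hspt : ∀ p ∈ msupport π, dW p.1 p.2 < ε / 4 := by
    intro p hp
    have h1 : ENNReal.ofReal (dW p.1 p.2) ≤ costInf π :=
      le_iSup₂ (f := fun (p : P2 × P2) (_ : p ∈ msupport π) => ENNReal.ofReal (dW p.1 p.2)) p hp
    exact (ENNReal.ofReal_lt_ofReal_iff (by linarith)).1 (h1.trans_lt hcost)
  have hincl : (closure (Weps ε) ∩ Wbd) ×ˢ Wcl ⊆ (Wcl ×ˢ Weps (ε / 2)) ∪ (msupport π)ᶜ := by
    rintro ⟨x, y⟩ ⟨⟨hxc, hxW⟩, hy⟩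
    by_cases hp : (x, y) ∈ msupport π
    · left
      refine ⟨subset_closure hxW, ?_⟩
      have hx2 : ε ≤ x.2 - x.1 := closure_Weps_subset ε hxc
      have hdx := distDiag_ge hx2
      have hd := hspt _ hp
      have hdy : (0 : ℝ) ≤ distDiag y := Metric.infDist_nonneg
      have hdist : dist x y < ε / 4 := by
        rcases min_lt_iff.mp hd with h' | h'
        · exact h'
        · exfalso; linarith
      rw [Prod.dist_eq, max_lt_iff] at hdist
      obtain ⟨ha, hb⟩ := hdist
      rw [Real.dist_eq] at ha hb
      have ha' := abs_lt.mp ha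
      have hb' := abs_lt.mp hb
      show ε / 2 < y.2 - y.1
      rcases ha' with ⟨ha1, ha2⟩
      rcases hb' with ⟨hb1, hb2⟩
      linarith
    · right; exact hp
  have hmeas1 : MeasurableSet (closure (Weps ε) ∩ Wbd) :=
    isClosed_closure.measurableSet.inter isOpen_Wbd.measurableSet
  have hmeas2 : MeasurableSet (Weps (ε / 2)) := (isOpen_Weps _).measurableSet
  calc ν (closure (Weps ε) ∩ Wbd)
      = π ((closure (Weps ε) ∩ Wbd) ×ˢ Wcl) :=
        (hc.2.1 _ Set.inter_subset_right hmeas1).symm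
    _ ≤ π ((Wcl ×ˢ Weps (ε / 2)) ∪ (msupport π)ᶜ) := measure_mono hincl
    _ ≤ π (Wcl ×ˢ Weps (ε / 2)) + π (msupport π)ᶜ := measure_union_le _ _
    _ = μ (Weps (ε / 2)) := by
        rw [msupport_compl_null, add_zero, hc.2.2 _ (Weps_subset_Wbd (by linarith)) hmeas2]

/-- A relatively compact subset of `(M_f^∞, OT_∞)` is uniformly
off-diagonally finite: for each `ε > 0`, `sup { μ(W̄_ε) : μ ∈ S } < ∞`, where `W̄_ε` is
the closure of `W_ε` in `W`. -/
theorem relCompact_uniformly_off_diagonally_finite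
    (S : Set (Measure P2)) (hS : S ⊆ Mf) (hrc : RelCompactInMf S) :
    ∀ ε : ℝ, 0 < ε → (⨆ μ ∈ S, μ (closure (Weps ε) ∩ Wbd)) < ⊤ := by
  intro ε hε
  by_contra hsup
  push_neg at hsup
  have htop : (⨆ μ ∈ S, μ (closure (Weps ε) ∩ Wbd)) = ⊤ := top_le_iff.mp hsup
  have hex : ∀ n : ℕ, ∃ ν ∈ S, (n : ℝ≥0∞) < ν (closure (Weps ε) ∩ Wbd) := by
    intro n
    have hlt : (n : ℝ≥0∞) < ⨆ μ ∈ S, μ (closure (Weps ε) ∩ Wbd) := by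
      rw [htop]; exact ENNReal.natCast_lt_top n
    obtain ⟨ν, h1⟩ := lt_iSup_iff.mp hlt
    obtain ⟨hνS, h2⟩ := lt_iSup_iff.mp h1
    exact ⟨ν, hνS, h2⟩
  choose u huS hu using hex
  obtain ⟨μ, hμ, φ, hφ, htend⟩ := hrc u huS
  have hM : μ (Weps (ε / 2)) < ⊤ := hμ.2 _ (by linarith)
  have hev : ∀ᶠ n in atTop, OT (u (φ n)) μ < ENNReal.ofReal (ε / 4) :=
    htend (Iio_mem_nhds (ENNReal.ofReal_pos.mpr (by linarith)))
  obtain ⟨n0, hn0⟩ := eventually_atTop.mp hev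
  obtain ⟨N, hN⟩ := ENNReal.exists_nat_gt hM.ne
  set n := max n0 N with hn
  have h1 := hn0 n (le_max_left _ _)
  have h2 : u (φ n) (closure (Weps ε) ∩ Wbd) ≤ μ (Weps (ε / 2)) := key_transfer hε h1
  have h3 : (φ n : ℝ≥0∞) < u (φ n) (closure (Weps ε) ∩ Wbd) := hu (φ n)
  have h4 : (N : ℝ≥0∞) ≤ (φ n : ℝ≥0∞) := by
    exact_mod_cast Nat.cast_le.mpr ((le_max_right n0 N).trans (hφ.le_apply))
  exact absurd (h4.trans_lt (h3.trans_le h2)) (not_lt.mpr hN.le)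
end
end

section
/- If S ⊆ M_f^∞ is relatively compact in (M_f^∞, OT_∞), then S is off-diagonally uniformly tight: for all ε > 0 and δ > 0, there exists N ∈ ℕ such that sup{ μ(W_ε ∩ ((ℝ \ [−N, N]) × ℝ)) : μ ∈ S } < δ. -/
/-! Common setup: the birth-death plane, Radon measures, partial optimal transport. -/

noncomputable section

open MeasureTheory Topology Filter Set
open scoped ENNReal

/-! A coupling of cost `< r ≤ ε/4` moves every point of `W_ε` by less than `r` in the sup-norm
(it is too far from the diagonal to be sent there), so mass of `μₙ` in `W_ε` beyond `|b| > N`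
is dominated by mass of the limit `μ` in `W_{ε/2}` beyond `|b| > N - r`. Since
`μ(W_{ε/2}) < ∞`, the latter tends to `0` as `N → ∞`. Hence a sequence in `S` violating
tightness would have no convergent subsequence. -/

lemma msupport_eq_support {X : Type*} [TopologicalSpace X] [MeasurableSpace X]
    (μ : Measure X) : msupport μ = μ.support := by
  ext x
  exact (Measure.mem_support_iff_forall x).symm

lemma abs_fst_sub_le_dist (x y : P2) : |x.1 - y.1| ≤ dist x y := by
  rw [Prod.dist_eq, ← Real.dist_eq]; exact le_max_left _ _

lemma abs_snd_sub_le_dist (x y : P2) : |x.2 - y.2| ≤ dist x y := by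
  rw [Prod.dist_eq, ← Real.dist_eq]; exact le_max_right _ _

lemma half_sub_le_distDiag (x : P2) : (x.2 - x.1) / 2 ≤ distDiag x := by
  refine (Metric.le_infDist (s := Diag) ⟨(0, 0), rfl⟩).2 fun y (hy : y.1 = y.2) => ?_
  linarith [abs_fst_sub_le_dist x y, abs_snd_sub_le_dist x y, neg_abs_le (x.1 - y.1),
    le_abs_self (x.2 - y.2)]

lemma dist_lt_of_dW_lt {x y : P2} {r : ℝ} (hx : 2 * r ≤ x.2 - x.1) (h : dW x y < r) :
    dist x y < r := by
  have hy : 0 ≤ distDiag y := Metric.infDist_nonneg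
  have hdiag : r ≤ distDiag x + distDiag y := by linarith [half_sub_le_distDiag x]
  rcases min_lt_iff.1 h with h | h
  · exact h
  · linarith

def farOffDiag (ε t : ℝ) : Set P2 := Weps ε ∩ {p | t < |p.1|}

lemma Weps_inter_Icc_compl_prod_univ (ε t : ℝ) :
    Weps ε ∩ ((Icc (-t) t)ᶜ ×ˢ univ) = farOffDiag ε t := by
  ext p
  simp [farOffDiag, ← abs_le]

lemma isOpen_farOffDiag (ε t : ℝ) : IsOpen (farOffDiag ε t) :=
  (isOpen_lt continuous_const (continuous_snd.sub continuous_fst)).inter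
    (isOpen_lt continuous_const (continuous_abs.comp continuous_fst))

lemma farOffDiag_subset_Wbd {ε : ℝ} (hε : 0 ≤ ε) (t : ℝ) : farOffDiag ε t ⊆ Wbd :=
  fun p hp => show p.1 < p.2 by linarith [show ε < p.2 - p.1 from hp.1]

lemma farOffDiag_antitone (ε : ℝ) : Antitone (farOffDiag ε) :=
  fun _ _ hst _ hp => ⟨hp.1, hst.trans_lt hp.2⟩

lemma mem_farOffDiag_of_dW_lt {x y : P2} {ε ε' t t' r : ℝ} (hx : x ∈ farOffDiag ε t)
    (hε' : 0 ≤ ε') (hε : ε' + 2 * r ≤ ε) (ht : t' + r ≤ t) (h : dW x y < r) :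
    y ∈ farOffDiag ε' t' := by
  have hxε : ε < x.2 - x.1 := hx.1
  have hxt : t < |x.1| := hx.2
  have hxy := dist_lt_of_dW_lt (by linarith) h
  have h1 := (abs_fst_sub_le_dist x y).trans_lt hxy
  have h2 := (abs_snd_sub_le_dist x y).trans_lt hxy
  refine ⟨show ε' < y.2 - y.1 from ?_, show t' < |y.1| from ?_⟩
  · linarith [neg_abs_le (x.1 - y.1), le_abs_self (x.2 - y.2)]
  · linarith [abs_sub_abs_le_abs_sub x.1 y.1]

lemma tendsto_measure_farOffDiag_atTop {μ : Measure P2} {ε : ℝ} (h : μ (Weps ε) ≠ ∞) :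
    Tendsto (fun t => μ (farOffDiag ε t)) atTop (𝓝 0) := by
  have hempty : ⋂ t, farOffDiag ε t = ∅ :=
    eq_empty_of_forall_notMem fun p hp => lt_irrefl |p.1| (mem_iInter.1 hp |p.1|).2
  have := tendsto_measure_iInter_atTop (μ := μ)
    (fun t => (isOpen_farOffDiag ε t).measurableSet.nullMeasurableSet)
    (farOffDiag_antitone ε) ⟨0, ne_top_of_le_ne_top h (measure_mono inter_subset_left)⟩
  rwa [hempty, measure_empty] at this

lemma exists_coupling_dW_lt_of_OT_lt {ν μ : Measure P2} {r : ℝ}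
    (h : OT ν μ < ENNReal.ofReal r) :
    ∃ π, IsCoupling π ν μ ∧ ∀ p ∈ msupport π, dW p.1 p.2 < r := by
  simp only [OT, iInf_lt_iff] at h
  obtain ⟨π, hπ, hcost⟩ := h
  refine ⟨π, hπ, fun p hp => ?_⟩
  have hle : ENNReal.ofReal (dW p.1 p.2) ≤ costInf π :=
    le_iSup₂ (f := fun p (_ : p ∈ msupport π) => ENNReal.ofReal (dW p.1 p.2)) p hp
  exact (ENNReal.ofReal_lt_ofReal_iff'.1 (hle.trans_lt hcost)).1

lemma IsCoupling.measure_le {π : Measure (P2 × P2)} {ν μ : Measure P2}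
    (hπ : IsCoupling π ν μ) {A B : Set P2} (hA : A ⊆ Wbd) (hAm : MeasurableSet A)
    (hB : B ⊆ Wbd) (hBm : MeasurableSet B)
    (hAB : ∀ p ∈ msupport π, p.1 ∈ A → p.2 ∈ B) : ν A ≤ μ B := by
  have hae : A ×ˢ Wcl ≤ᵐ[π] Wcl ×ˢ B := by
    filter_upwards [Measure.support_mem_ae] with p hp hpA
    exact ⟨subset_closure (hA hpA.1), hAB p (msupport_eq_support π ▸ hp) hpA.1⟩
  calc ν A = π (A ×ˢ Wcl) := (hπ.2.1 A hA hAm).symm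
    _ ≤ π (Wcl ×ˢ B) := measure_mono_ae hae
    _ = μ B := hπ.2.2 B hB hBm

lemma measure_farOffDiag_le_of_OT_lt {ν μ : Measure P2} {ε ε' t t' r : ℝ}
    (h : OT ν μ < ENNReal.ofReal r) (hε' : 0 ≤ ε') (hε : ε' + 2 * r ≤ ε) (ht : t' + r ≤ t) :
    ν (farOffDiag ε t) ≤ μ (farOffDiag ε' t') := by
  obtain ⟨π, hπ, hcost⟩ := exists_coupling_dW_lt_of_OT_lt h
  have hr : 0 < r := ENNReal.ofReal_pos.1 (pos_of_gt h)
  refine hπ.measure_le (farOffDiag_subset_Wbd (by linarith) t)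
    (isOpen_farOffDiag ε t).measurableSet (farOffDiag_subset_Wbd hε' t')
    (isOpen_farOffDiag ε' t').measurableSet fun p hp hp1 => ?_
  exact mem_farOffDiag_of_dW_lt hp1 hε' hε ht (hcost p hp)

theorem relCompact_off_diagonally_uniformly_tight_general
    (S : Set (Measure P2)) (hrc : RelCompactInMf S) :
    ∀ ε : ℝ, 0 < ε → ∀ δ : ℝ, 0 < δ → ∃ N : ℕ,
      (⨆ μ ∈ S, μ (Weps ε ∩ ((Set.Icc (-(N : ℝ)) (N : ℝ))ᶜ ×ˢ Set.univ)))
        < ENNReal.ofReal δ := by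
  intro ε hε δ hδ
  simp_rw [Weps_inter_Icc_compl_prod_univ]
  by_contra! hfar
  have hδ2 : ENNReal.ofReal (δ / 2) < ENNReal.ofReal δ :=
    (ENNReal.ofReal_lt_ofReal_iff hδ).2 (by linarith)
  choose u huS hu using fun N : ℕ => lt_biSup_iff.1 (hδ2.trans_le (hfar N))
  obtain ⟨μ, hμ, φ, hφ, hconv⟩ := hrc u huS
  have hshift : Tendsto (fun n => (φ n : ℝ) + -(ε / 4)) atTop atTop :=
    tendsto_atTop_add_const_right _ _ (tendsto_natCast_atTop_atTop.comp hφ.tendsto_atTop)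
  have htail := (tendsto_measure_farOffDiag_atTop (hμ.2 (ε / 2) (by positivity)).ne).comp hshift
  have hδ2_pos : (0 : ℝ≥0∞) < ENNReal.ofReal (δ / 2) := ENNReal.ofReal_pos.2 (by positivity)
  have hr_pos : (0 : ℝ≥0∞) < ENNReal.ofReal (ε / 4) := ENNReal.ofReal_pos.2 (by positivity)
  obtain ⟨n, hn_tail, hn_OT⟩ :=
    ((htail.eventually (gt_mem_nhds hδ2_pos)).and (hconv.eventually (gt_mem_nhds hr_pos))).exists
  have hmove := measure_farOffDiag_le_of_OT_lt (ε := ε) (ε' := ε / 2) (t := φ n)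
    (t' := φ n + -(ε / 4)) hn_OT (by positivity) (by linarith) (by linarith)
  exact (hu (φ n)).not_ge (hmove.trans hn_tail.le)

/-- A relatively compact subset of `(M_f^∞, OT_∞)` is off-diagonally
uniformly tight: for all `ε, δ > 0` there is `N ∈ ℕ` with
`sup { μ(W_ε ∩ ((ℝ \ [-N,N]) × ℝ)) : μ ∈ S } < δ`. -/
theorem relCompact_off_diagonally_uniformly_tight
    (S : Set (Measure P2)) (hS : S ⊆ Mf) (hrc : RelCompactInMf S) :
    ∀ ε : ℝ, 0 < ε → ∀ δ : ℝ, 0 < δ → ∃ N : ℕ,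
      (⨆ μ ∈ S, μ (Weps ε ∩ ((Set.Icc (-(N : ℝ)) (N : ℝ))ᶜ ×ˢ Set.univ)))
        < ENNReal.ofReal δ :=
  relCompact_off_diagonally_uniformly_tight_general S hrc
end
end
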